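/- Let R be a Noetherian ring, I an ideal, M a finitely generated R-module, f ∈ I^s \\ I^{s+1}. Then f is superficial for M with respect to I if and only if the initial form f̄ ∈ I^s/I^{s+1} does not belong to any associated prime p of the graded module G_I(M) over G_I(R) that does not contain the irrelevant ideal G_I(R)_+ (equivalently, does not contain I/I²). -/

import Mathlib

set_option synthInstance.maxHeartbeats 1000000
set_option maxHeartbeats 2000000

open Polynomial PolynomialModule

universe u

variable {R : Type u} [CommRing R] (I : Ideal R) (M : Type u) [AddCommGroup M] [Module R M]

/-- `f` is superficial of degree `s` for `M` with respect to `I`: for all large `n`,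
multiplication by the initial form of `f` is injective `G_I(M)_n → G_I(M)_{n+s}`. -/
def IsSuperficial (f : R) (s : ℕ) : Prop :=
  ∃ n₀ : ℕ, ∀ n ≥ n₀, ∀ x ∈ (I ^ n • (⊤ : Submodule R M)),
    f • x ∈ (I ^ (n + s + 1) • (⊤ : Submodule R M)) → x ∈ I ^ (n + 1) • (⊤ : Submodule R M)

/-- `B(M) = ⊕ₙ Iⁿ M tⁿ` as a module over the Rees algebra `B(R) = R[It]`. -/
noncomputable abbrev reesModule : Submodule (reesAlgebra I) (PolynomialModule R M) :=
  (I.stableFiltration (⊤ : Submodule R M)).submodule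

/-- The ideal `I·B(R)` of the Rees algebra. -/
noncomputable abbrev reesIdeal : Ideal (reesAlgebra I) :=
  I.map (algebraMap R (reesAlgebra I))

/-- The associated graded ring `G_I(R) = B(R)/I·B(R)`. -/
noncomputable abbrev gradedRing : Type u :=
  ↥(reesAlgebra I) ⧸ reesIdeal I

noncomputable instance : AddCommGroup ↥(reesModule I M) := inferInstance
noncomputable instance : Module ↥(reesAlgebra I) ↥(reesModule I M) := inferInstance
noncomputable instance :
    HasQuotient ↥(reesModule I M) (Submodule ↥(reesAlgebra I) ↥(reesModule I M)) :=
  Submodule.hasQuotient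

/-- The associated graded module `G_I(M) = B(M)/I·B(M)`, a module over `G_I(R)`. -/
noncomputable abbrev gradedModule : Type u :=
  ↥(reesModule I M) ⧸
    (reesIdeal I • (⊤ : Submodule ↥(reesAlgebra I) ↥(reesModule I M)))

/-- The initial form `f̄ ∈ I^s/I^{s+1} ⊆ G_I(R)` of an element `f ∈ I^s`,
i.e. the class of `f·tˢ` in `B(R)/I·B(R)`. -/
noncomputable def initialForm {I : Ideal R} (f : R) {s : ℕ} (hf : f ∈ I ^ s) : gradedRing I :=
  Ideal.Quotient.mk _ ⟨Polynomial.monomial s f, reesAlgebra.monomial_mem.mpr hf⟩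


namespace Stmt8
variable {R : Type u} [CommRing R] {M : Type u} [AddCommGroup M] [Module R M] {I : Ideal R}

lemma mem_reesModule_single {n : ℕ} {x : M} (hx : x ∈ I ^ n • (⊤ : Submodule R M)) :
    single R n x ∈ reesModule I M := by
  rw [Ideal.Filtration.mem_submodule]
  intro i
  show (single R n x).coeff i ∈ I ^ i • ⊤
  rw [PolynomialModule.coeff_single, Finsupp.single_apply]
  split
  · next h => subst h; exact hx
  · exact zero_mem _

lemma coe_apply_mem (b : ↥(reesModule I M)) (n : ℕ) :
    b.1.coeff n ∈ I ^ n • (⊤ : Submodule R M) :=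
  (Ideal.Filtration.mem_submodule _ _).1 b.2 n

/-- the class of `single n x` in the graded module -/
noncomputable def nu (n : ℕ) (x : M) (hx : x ∈ I ^ n • (⊤ : Submodule R M)) :
    gradedModule I M :=
  Submodule.Quotient.mk ⟨single R n x, mem_reesModule_single hx⟩

lemma coe_smul (g : ↥(reesAlgebra I)) (b : ↥(reesModule I M)) :
    (↑(g • b) : PolynomialModule R M) = (g : R[X]) • (b : PolynomialModule R M) := rfl


lemma mem_colon_bot_iff {A P : Type*} [CommSemiring A] [AddCommMonoid P] [Module A P] (r : A) (z : P) :
    r ∈ Submodule.colon (⊥ : Submodule A P) {z} ↔ r • z = 0 := by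
  rw [Submodule.mem_colon_singleton, Submodule.mem_bot]

lemma mem_colon_bot_eq_top {A P : Type*} [CommRing A] [AddCommGroup P] [Module A P] (q : Ideal A) :
    q = Submodule.colon (⊥ : Submodule A P) {0} ↔ q = ⊤ := by
  rw [show Submodule.colon (⊥ : Submodule A P) {0} = ⊤ from
    Submodule.eq_top_iff'.2 fun r => (mem_colon_bot_iff r 0).2 (smul_zero r)]
end Stmt8

namespace Stmt8
variable {R : Type u} [CommRing R] {M : Type u} [AddCommGroup M] [Module R M] {I : Ideal R}

/-- The degreewise description of `I·B(M)` as a submodule of `B(M)`. -/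
noncomputable def Tsub (I : Ideal R) (M : Type u) [AddCommGroup M] [Module R M] :
    Submodule (reesAlgebra I) ↥(reesModule I M) where
  carrier := {b | ∀ n, (b : PolynomialModule R M).coeff n ∈ I ^ (n + 1) • (⊤ : Submodule R M)}
  add_mem' := by
    intro a b ha hb n
    show ((a : PolynomialModule R M) + b).coeff n ∈ _
    rw [PolynomialModule.coeff_add, Finsupp.add_apply]
    exact add_mem (ha n) (hb n)
  zero_mem' := by intro n; exact zero_mem _
  smul_mem' := by
    intro g b hb n
    rw [coe_smul, PolynomialModule.smul_apply]
    refine sum_mem ?_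
    rintro ⟨i, j⟩ hij
    rw [Finset.HasAntidiagonal.mem_antidiagonal] at hij
    have h1 : (g : R[X]).coeff i ∈ I ^ i := (mem_reesAlgebra_iff I _).1 g.2 i
    have h2 : (b : PolynomialModule R M).coeff j ∈ I ^ (j + 1) • (⊤ : Submodule R M) := hb j
    have : (g : R[X]).coeff i • (b : PolynomialModule R M).coeff j
        ∈ I ^ i • (I ^ (j + 1) • (⊤ : Submodule R M)) :=
      Submodule.smul_mem_smul h1 h2
    rwa [← Submodule.smul_assoc, smul_eq_mul, ← pow_add, show i + (j+1) = n + 1 by omega] at this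
end Stmt8

namespace Stmt8
variable {R : Type u} [CommRing R] {M : Type u} [AddCommGroup M] [Module R M] {I : Ideal R}

lemma pm_sub_apply (b c : PolynomialModule R M) (n : ℕ) : (b - c).coeff n = b.coeff n - c.coeff n := by
  have h : (b - c) + c = b := sub_add_cancel b c
  have h2 := congrArg (fun q : PolynomialModule R M => q.coeff n) h
  simp only [PolynomialModule.coeff_add, Finsupp.add_apply] at h2
  exact eq_sub_of_add_eq h2

lemma eq_sum_single (d : ℕ) : ∀ (b : PolynomialModule R M), (∀ n, d < n → b.coeff n = 0) →
    (Finset.range (d + 1)).sum (fun n => single R n (b.coeff n)) = b := by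
  induction d with
  | zero =>
    intro b hb
    rw [Finset.sum_range_one]
    refine PolynomialModule.ext (Finsupp.ext fun k => ?_)
    rw [PolynomialModule.coeff_single, Finsupp.single_apply]
    split
    · next h => subst h; rfl
    · next h => exact (hb k (Nat.pos_of_ne_zero fun hk => h hk.symm)).symm
  | succ d ih =>
    intro b hb
    set c : PolynomialModule R M := b - single R (d + 1) (b.coeff (d + 1)) with hc
    have hcn : ∀ n, d < n → c.coeff n = 0 := by
      intro n hn
      rw [hc, pm_sub_apply, PolynomialModule.coeff_single, Finsupp.single_apply]
      rcases eq_or_ne (d + 1) n with h | h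
      · subst h; simp
      · rw [if_neg h, sub_zero]
        exact hb n (by omega)
    have hbc : ∀ n ∈ Finset.range (d + 1), single R n (b.coeff n) = single R n (c.coeff n) := by
      intro n hn
      rw [Finset.mem_range] at hn
      congr 1
      rw [hc, pm_sub_apply, PolynomialModule.coeff_single, Finsupp.single_apply, if_neg (by omega), sub_zero]
    rw [Finset.sum_range_succ, Finset.sum_congr rfl hbc, ih c hcn, hc]
    exact sub_add_cancel b _

lemma pow_succ_smul_le (n : ℕ) :
    I ^ (n + 1) • (⊤ : Submodule R M) ≤ I ^ n • ⊤ :=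
  Submodule.smul_mono_left (Ideal.pow_le_pow_right (Nat.le_succ n))

lemma single_mem_smul_top {n : ℕ} {x : M} (hx : x ∈ I ^ (n + 1) • (⊤ : Submodule R M)) :
    (⟨single R n x, mem_reesModule_single (pow_succ_smul_le n hx)⟩ : ↥(reesModule I M)) ∈
      reesIdeal I • (⊤ : Submodule (reesAlgebra I) ↥(reesModule I M))  := by
  rw [pow_succ', ← smul_eq_mul, Submodule.smul_assoc] at hx
  refine Submodule.smul_induction_on (p := fun x => ∃ h : x ∈ I ^ n • (⊤ : Submodule R M),
      (⟨single R n x, mem_reesModule_single h⟩ : ↥(reesModule I M)) ∈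
        reesIdeal I • (⊤ : Submodule (reesAlgebra I) ↥(reesModule I M))) hx ?_ ?_
      |>.choose_spec
  · intro r hr m hm
    refine ⟨Submodule.smul_mem _ _ hm, ?_⟩
    have he : (⟨single R n (r • m), mem_reesModule_single (Submodule.smul_mem _ _ hm)⟩ :
        ↥(reesModule I M)) = (algebraMap R (reesAlgebra I) r) • ⟨single R n m,
          mem_reesModule_single hm⟩ := by
      refine Subtype.ext ?_
      rw [coe_smul]
      show single R n (r • m) = (algebraMap R (reesAlgebra I) r : R[X]) • single R n m
      rw [show ((algebraMap R (reesAlgebra I) r : R[X])) = algebraMap R R[X] r from rfl,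
        algebraMap_smul, PolynomialModule.single_smul]
    rw [he]
    exact Submodule.smul_mem_smul (Ideal.mem_map_of_mem _ hr) trivial
  · rintro x y ⟨hx1, hx2⟩ ⟨hy1, hy2⟩
    refine ⟨add_mem hx1 hy1, ?_⟩
    have he : (⟨single R n (x + y), mem_reesModule_single (add_mem hx1 hy1)⟩ :
        ↥(reesModule I M)) = ⟨single R n x, mem_reesModule_single hx1⟩ +
          ⟨single R n y, mem_reesModule_single hy1⟩ := by
      refine Subtype.ext ?_
      show single R n (x + y) = single R n x + single R n y
      exact PolynomialModule.single_add n x y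
    rw [he]
    exact add_mem hx2 hy2

lemma smul_top_eq :
    (reesIdeal I • ⊤ : Submodule (reesAlgebra I) ↥(reesModule I M)) = Tsub I M := by
  refine le_antisymm (Submodule.smul_le.2 ?_) ?_
  · intro g hg b _
    have hg' : g ∈ Ideal.span ((algebraMap R (reesAlgebra I)) '' I) := hg
    clear hg
    induction hg' using Submodule.span_induction with
    | mem a ha =>
      obtain ⟨i, hi, rfl⟩ := ha
      intro k
      rw [coe_smul]
      show ((algebraMap R R[X] i) • (b : PolynomialModule R M)).coeff k ∈ _
      rw [algebraMap_smul]
      have : (i • (b : PolynomialModule R M)).coeff k = i • (b : PolynomialModule R M).coeff k :=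
        Finsupp.smul_apply ..
      rw [this]
      have := Submodule.smul_mem_smul hi (coe_apply_mem b k)
      rwa [← Submodule.smul_assoc, smul_eq_mul, ← pow_succ'] at this
    | zero => rw [zero_smul]; exact zero_mem _
    | add a a' _ _ h1 h2 => rw [add_smul]; exact add_mem h1 h2
    | smul r a _ h1 =>
      rw [smul_eq_mul, mul_smul]
      exact Submodule.smul_mem _ _ h1
  · intro b hb
    have hball : ∀ n, (b : PolynomialModule R M).coeff n ∈ I ^ (n + 1) • (⊤ : Submodule R M) := hb
    obtain ⟨d, hd⟩ : ∃ d : ℕ, ∀ n, d < n → (b : PolynomialModule R M).coeff n = 0 := by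
      set S : Finset ℕ := (show ℕ →₀ M from b.1.coeff).support with hS
      refine ⟨S.sup id, fun n hn => ?_⟩
      by_contra h
      have hmem : n ∈ S := Finsupp.mem_support_iff.2 h
      have h2 : id n ≤ S.sup id := Finset.le_sup hmem
      simp only [id] at h2
      omega
    have hsum : b = (Finset.range (d + 1)).sum
        (fun n => (⟨single R n ((b : PolynomialModule R M).coeff n),
          mem_reesModule_single (coe_apply_mem b n)⟩ : ↥(reesModule I M))) := by
      refine Subtype.ext ?_
      rw [AddSubmonoidClass.coe_finset_sum]
      exact (eq_sum_single d _ hd).symm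
    rw [hsum]
    exact sum_mem fun n _ => single_mem_smul_top (hball n)

lemma mem_smul_top_iff (b : ↥(reesModule I M)) :
    b ∈ (reesIdeal I • ⊤ : Submodule (reesAlgebra I) ↥(reesModule I M)) ↔
      ∀ n, (b : PolynomialModule R M).coeff n ∈ I ^ (n + 1) • (⊤ : Submodule R M) := by
  rw [smul_top_eq]; rfl

lemma nu_eq_zero_iff {n : ℕ} {x : M} (hx : x ∈ I ^ n • (⊤ : Submodule R M)) :
    nu n x hx = (0 : gradedModule I M) ↔ x ∈ I ^ (n + 1) • (⊤ : Submodule R M) := by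
  rw [nu, Submodule.Quotient.mk_eq_zero, mem_smul_top_iff]
  constructor
  · intro h
    have := h n
    rwa [show (single R n x).coeff n = x by rw [PolynomialModule.coeff_single, Finsupp.single_apply, if_pos rfl]] at this
  · intro h k
    show (single R n x).coeff k ∈ _
    rw [PolynomialModule.coeff_single, Finsupp.single_apply]
    split
    · next hk => subst hk; exact h
    · exact zero_mem _

end Stmt8

namespace Stmt8
variable {R : Type u} [CommRing R] {M : Type u} [AddCommGroup M] [Module R M] {I : Ideal R}

lemma mk_smul_mk (g : ↥(reesAlgebra I)) (b : ↥(reesModule I M)) :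
    (Ideal.Quotient.mk (reesIdeal I) g) • (Submodule.Quotient.mk b : gradedModule I M)
      = Submodule.Quotient.mk (g • b) := rfl

lemma forward {R M : Type u} [CommRing R] [IsNoetherianRing R] [AddCommGroup M] [Module R M]
    [Module.Finite R M] (I : Ideal R) (f : R) (s : ℕ) (hf : f ∈ I ^ s)
    (hsup : IsSuperficial I M f s) :
    ∀ p ∈ associatedPrimes (gradedRing I) (gradedModule I M),
      (∃ a : R, ∃ ha : a ∈ I,
          initialForm a (show a ∈ I ^ 1 by simpa [pow_one] using ha) ∉ p) →
        initialForm f hf ∉ p := by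
  obtain ⟨n₀, hn₀⟩ := hsup
  rintro p hp ⟨a, ha, hap⟩ hF
  haveI : IsNoetherianRing (gradedRing I) := Ideal.Quotient.isNoetherianRing _
  obtain ⟨hprime, z, hz⟩ := isAssociatedPrime_iff.1 hp
  have hFz : initialForm f hf • z = 0 := by
    rw [hz] at hF; exact (mem_colon_bot_iff _ _).1 hF
  obtain ⟨b₀, rfl⟩ := Submodule.Quotient.mk_surjective _ z
  set abar : gradedRing I :=
    initialForm a (show a ∈ I ^ 1 by simpa [pow_one] using ha) with habar
  set g : ↥(reesAlgebra I) :=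
    ⟨Polynomial.monomial n₀ (a ^ n₀), reesAlgebra.monomial_mem.mpr (Ideal.pow_mem_pow ha n₀)⟩
    with hg
  have hpow : abar ^ n₀ = Ideal.Quotient.mk (reesIdeal I) g := by
    rw [habar, initialForm, ← map_pow]
    congr 1
    refine Subtype.ext ?_
    show (Polynomial.monomial 1 a) ^ n₀ = Polynomial.monomial n₀ (a ^ n₀)
    rw [Polynomial.monomial_pow, one_mul]
  set b : ↥(reesModule I M) := g • b₀ with hb
  have hzb : abar ^ n₀ • (Submodule.Quotient.mk b₀ : gradedModule I M)
      = Submodule.Quotient.mk b := by rw [hpow]; rfl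
  have hwne : (Submodule.Quotient.mk b : gradedModule I M) ≠ 0 := by
    rw [← hzb]
    intro h
    have : abar ^ n₀ ∈ p := by
      rw [hz]; exact (mem_colon_bot_iff _ _).2 h
    exact hap (hprime.mem_of_pow_mem n₀ this)
  have h0 : ((⟨Polynomial.monomial s f, reesAlgebra.monomial_mem.mpr hf⟩ :
      ↥(reesAlgebra I)) • b) ∈ (reesIdeal I • ⊤ :
        Submodule (reesAlgebra I) ↥(reesModule I M)) := by
    have h1 : ((⟨Polynomial.monomial s f, reesAlgebra.monomial_mem.mpr hf⟩ :
        ↥(reesAlgebra I)) • b₀) ∈ (reesIdeal I • ⊤ :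
          Submodule (reesAlgebra I) ↥(reesModule I M)) := by
      rw [← Submodule.Quotient.mk_eq_zero]
      exact hFz
    have h2 : (⟨Polynomial.monomial s f, reesAlgebra.monomial_mem.mpr hf⟩ :
        ↥(reesAlgebra I)) • b = g •
          ((⟨Polynomial.monomial s f, reesAlgebra.monomial_mem.mpr hf⟩ :
            ↥(reesAlgebra I)) • b₀) := by
      rw [hb, smul_smul, smul_smul]
      congr 1
      exact mul_comm _ _
    rw [h2]
    exact Submodule.smul_mem _ _ h1
  -- find a bad degree
  obtain ⟨n, hn⟩ : ∃ n, (b : PolynomialModule R M).coeff n ∉ I ^ (n + 1) • (⊤ : Submodule R M) := by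
    by_contra h
    push_neg at h
    exact hwne ((Submodule.Quotient.mk_eq_zero _).2 ((mem_smul_top_iff b).2 h))
  have hbn : (b : PolynomialModule R M).coeff n
      = if n₀ ≤ n then (a ^ n₀) • (b₀ : PolynomialModule R M).coeff (n - n₀) else 0 := by
    rw [hb, coe_smul, hg]
    exact PolynomialModule.monomial_smul_apply n₀ (a ^ n₀) _ n
  have hnge : n₀ ≤ n := by
    by_contra h
    rw [hbn, if_neg h] at hn
    exact hn (zero_mem _)
  -- f • (b n) ∈ I^(n+s+1) M
  have hfbn : f • (b : PolynomialModule R M).coeff n ∈ I ^ (n + s + 1) • (⊤ : Submodule R M) := by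
    have h1 := (mem_smul_top_iff _).1 h0 (n + s)
    rw [coe_smul] at h1
    rw [PolynomialModule.monomial_smul_apply, if_pos (by omega),
      show n + s - s = n by omega] at h1
    exact h1
  exact hn (hn₀ n hnge _ (coe_apply_mem b n) hfbn)

end Stmt8

namespace Stmt8

/-- If `a` lies in every associated prime of a Noetherian module `P`, it acts nilpotently. -/
lemma nilpotent_smul_of_mem_all_associatedPrimes {A : Type u} [CommRing A] [IsNoetherianRing A]
    {P : Type u} [AddCommGroup P] [Module A P] [IsNoetherian A P] (a : A)
    (h : ∀ p ∈ associatedPrimes A P, a ∈ p) : ∃ k : ℕ, ∀ x : P, a ^ k • x = 0 := by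
  obtain ⟨k, hk⟩ := monotone_stabilizes_iff_noetherian.mpr ‹IsNoetherian A P›
    ⟨fun i => LinearMap.ker (LinearMap.lsmul A P (a ^ i)),
     fun i j hij x hx => by
      have hx' : a ^ i • x = 0 := hx
      show a ^ j • x = 0
      rw [← Nat.add_sub_cancel' hij, pow_add, mul_comm, mul_smul, hx', smul_zero]⟩
  refine ⟨k, ?_⟩
  by_contra hcon
  push_neg at hcon
  obtain ⟨x₀, hx₀⟩ := hcon
  set S : Submodule A P := LinearMap.ker (LinearMap.lsmul A P (a ^ k)) with hS
  have hStop : S < ⊤ := lt_top_iff_ne_top.2 fun hST => hx₀ (by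
    have : x₀ ∈ S := hST ▸ Submodule.mem_top
    exact this)
  haveI : Nontrivial (P ⧸ S) := Submodule.Quotient.nontrivial_iff.2 hStop.ne
  obtain ⟨q, hq⟩ := associatedPrimes.nonempty A (P ⧸ S)
  obtain ⟨hqp, y, hy⟩ := isAssociatedPrime_iff.1 hq
  -- a acts injectively on P ⧸ S
  have hinj : ∀ z : P ⧸ S, a • z = 0 → z = 0 := by
    intro z hz
    obtain ⟨w, rfl⟩ := Submodule.Quotient.mk_surjective _ z
    rw [← Submodule.Quotient.mk_smul, Submodule.Quotient.mk_eq_zero] at hz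
    have hw : w ∈ LinearMap.ker (LinearMap.lsmul A P (a ^ (k + 1))) := by
      show a ^ (k + 1) • w = 0
      have : a ^ k • (a • w) = 0 := hz
      rw [pow_succ, mul_smul]
      rwa [smul_comm] at this
    rw [Submodule.Quotient.mk_eq_zero]
    have heq : LinearMap.ker (LinearMap.lsmul A P (a ^ k))
        = LinearMap.ker (LinearMap.lsmul A P (a ^ (k + 1))) := hk (k + 1) (Nat.le_succ k)
    rw [hS, heq]
    exact hw
  have hyne : y ≠ 0 := by
    rintro rfl
    rw [mem_colon_bot_eq_top] at hy
    exact hqp.ne_top hy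
  have haq : a ∉ q := by
    intro haq
    have : a • y = 0 := by
      rw [← mem_colon_bot_iff, ← hy]; exact haq
    exact hyne (hinj y this)
  obtain ⟨w, rfl⟩ := Submodule.Quotient.mk_surjective _ y
  have hq' : q ∈ associatedPrimes A P := by
    refine (AssociatedPrimes.mem_iff).2 (isAssociatedPrime_iff.2 ⟨hqp, a ^ k • w, ?_⟩)
    rw [hy]
    ext g
    rw [mem_colon_bot_iff, mem_colon_bot_iff]
    constructor
    · intro hg
      rw [← Submodule.Quotient.mk_smul, Submodule.Quotient.mk_eq_zero] at hg
      have : a ^ k • (g • w) = 0 := hg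
      rw [smul_comm] at this
      exact this
    · intro hg
      rw [← Submodule.Quotient.mk_smul, Submodule.Quotient.mk_eq_zero]
      show g • w ∈ S
      show a ^ k • (g • w) = 0
      rwa [smul_comm]
  exact haq (h q hq')

end Stmt8

namespace Stmt8
variable {R : Type u} [CommRing R] {M : Type u} [AddCommGroup M] [Module R M] {I : Ideal R}

lemma noetherianRing_gradedRing [IsNoetherianRing R] : IsNoetherianRing (gradedRing I) :=
  Ideal.Quotient.isNoetherianRing (reesIdeal I)

lemma finite_reesModule [IsNoetherianRing R] [Module.Finite R M] :
    Module.Finite (reesAlgebra I) ↥(reesModule I M) :=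
  Module.Finite.iff_fg.2 ((Ideal.Filtration.submodule_fg_iff_stable _
    (fun _ => IsNoetherian.noetherian _)).2 (Ideal.stableFiltration_stable I ⊤))

lemma noetherian_gradedModule [IsNoetherianRing R] [Module.Finite R M] :
    IsNoetherian (gradedRing I) (gradedModule I M) := by
  haveI := finite_reesModule (I := I) (M := M)
  haveI h1 : IsNoetherian (reesAlgebra I) ↥(reesModule I M) :=
    isNoetherian_of_isNoetherianRing_of_finite _ _
  haveI h2 : IsNoetherian (reesAlgebra I) (gradedModule I M) := inferInstance
  exact isNoetherian_of_tower (reesAlgebra I) h2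

end Stmt8

namespace Stmt8
variable {R : Type u} [CommRing R] {M : Type u} [AddCommGroup M] [Module R M] {I : Ideal R}

/-- Class of `c·tⁱ` in the graded ring (generalised initial form). -/
noncomputable def homElt (I : Ideal R) (i : ℕ) (c : R) (hc : c ∈ I ^ i) : gradedRing I :=
  Ideal.Quotient.mk _ ⟨Polynomial.monomial i c, reesAlgebra.monomial_mem.mpr hc⟩

lemma smul_mem_pow_smul {i n : ℕ} {c : R} {x : M} (hc : c ∈ I ^ i)
    (hx : x ∈ I ^ n • (⊤ : Submodule R M)) : c • x ∈ I ^ (i + n) • (⊤ : Submodule R M) := by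
  have := Submodule.smul_mem_smul hc hx
  rwa [← Submodule.smul_assoc, smul_eq_mul, ← pow_add] at this

lemma homElt_smul_nu {i n : ℕ} {c : R} {x : M} (hc : c ∈ I ^ i)
    (hx : x ∈ I ^ n • (⊤ : Submodule R M)) :
    homElt I i c hc • nu n x hx = nu (i + n) (c • x) (smul_mem_pow_smul hc hx) := by
  rw [homElt, nu, nu, mk_smul_mk]
  congr 1
  refine Subtype.ext ?_
  show (Polynomial.monomial i c) • single R n x = single R (i + n) (c • x)
  exact PolynomialModule.monomial_smul_single i c n x

/-- The ideal of `G_I(R)` generated by all degree-one initial forms. -/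
noncomputable def Qdeg1 (I : Ideal R) : Ideal (gradedRing I) :=
  Ideal.span {g | ∃ (a : R) (ha : a ∈ I),
    g = homElt I 1 a (by rwa [pow_one])}

lemma homElt_one_mem {a : R} (h : a ∈ I ^ 1) : homElt I 1 a h ∈ Qdeg1 I :=
  Ideal.subset_span ⟨a, by rwa [pow_one] at h, rfl⟩

lemma homElt_mem_pow (i : ℕ) : ∀ c : R, ∀ hc : c ∈ I ^ i, homElt I i c hc ∈ Qdeg1 I ^ i := by
  induction i with
  | zero => intro c hc; rw [Submodule.pow_zero, Ideal.one_eq_top]; trivial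
  | succ i ih =>
    intro c hc
    rw [pow_succ] at hc
    have key : ∃ h : c ∈ I ^ (i + 1), homElt I (i + 1) c h ∈ Qdeg1 I ^ (i + 1) := by
      refine Submodule.mul_induction_on hc ?_ ?_
      · intro u hu v hv
        have hc' : u * v ∈ I ^ (i + 1) := by rw [pow_succ]; exact Ideal.mul_mem_mul hu hv
        refine ⟨hc', ?_⟩
        have he : homElt I (i + 1) (u * v) hc'
            = homElt I i u hu * homElt I 1 v (by rwa [pow_one]) := by
          rw [homElt, homElt, homElt, ← map_mul]
          congr 1
          refine Subtype.ext ?_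
          show Polynomial.monomial (i + 1) (u * v)
            = Polynomial.monomial i u * Polynomial.monomial 1 v
          rw [Polynomial.monomial_mul_monomial]
        rw [he, Submodule.pow_succ (M := Qdeg1 I)]
        exact Ideal.mul_mem_mul (ih u hu) (homElt_one_mem _)
      · rintro x y ⟨hx1, hx2⟩ ⟨hy1, hy2⟩
        refine ⟨add_mem hx1 hy1, ?_⟩
        have he : homElt I (i + 1) (x + y) (add_mem hx1 hy1)
            = homElt I (i + 1) x hx1 + homElt I (i + 1) y hy1 := by
          rw [homElt, homElt, homElt, ← map_add]
          congr 1
          refine Subtype.ext ?_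
          show Polynomial.monomial (i + 1) (x + y)
            = Polynomial.monomial (i + 1) x + Polynomial.monomial (i + 1) y
          rw [map_add]
        rw [he]
        exact add_mem hx2 hy2
    exact key.choose_spec

lemma pm_finset_sum_apply {ι : Type*} (t : Finset ι) (F : ι → PolynomialModule R M) (n : ℕ) :
    (t.sum F).coeff n = t.sum (fun i => (F i).coeff n) := by
  classical
  induction t using Finset.induction with
  | empty => rfl
  | insert _ _ hnotmem ih =>
    rw [Finset.sum_insert hnotmem, Finset.sum_insert hnotmem, PolynomialModule.coeff_add, Finsupp.add_apply, ih]

end Stmt8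

namespace Stmt8

lemma converse {R M : Type u} [CommRing R] [IsNoetherianRing R] [AddCommGroup M] [Module R M]
    [Module.Finite R M] (I : Ideal R) (f : R) (s : ℕ) (hf : f ∈ I ^ s)
    (hyp : ∀ p ∈ associatedPrimes (gradedRing I) (gradedModule I M),
      (∃ a : R, ∃ ha : a ∈ I,
          initialForm a (show a ∈ I ^ 1 by simpa [pow_one] using ha) ∉ p) →
        initialForm f hf ∉ p) :
    IsSuperficial I M f s := by
  classical
  haveI := noetherianRing_gradedRing (I := I) (R := R)
  haveI hN : IsNoetherian (gradedRing I) (gradedModule I M) := noetherian_gradedModule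
  set F : gradedRing I := initialForm f hf with hF
  set K : Submodule (gradedRing I) (gradedModule I M) :=
    LinearMap.ker (LinearMap.lsmul (gradedRing I) (gradedModule I M) F) with hK
  have memK : ∀ z : gradedModule I M, z ∈ K ↔ F • z = 0 := fun z => Iff.rfl
  -- Step A : every associated prime of K contains every degree-one form
  have hKass : ∀ p ∈ associatedPrimes (gradedRing I) ↥K, ∀ a : R, ∀ ha : a ∈ I ^ 1,
      homElt I 1 a ha ∈ p := by
    intro p hp a ha
    by_contra hap
    have hpN : p ∈ associatedPrimes (gradedRing I) (gradedModule I M) :=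
      associatedPrimes.subset_of_injective (Submodule.injective_subtype K) hp
    have hFp : F ∈ p := by
      obtain ⟨hpr, x, hx⟩ := isAssociatedPrime_iff.1 hp
      rw [hx]; refine (mem_colon_bot_iff _ _).2 ?_
      refine Subtype.ext ?_
      show F • (x : gradedModule I M) = 0
      exact x.2
    exact hyp p hpN ⟨a, by rwa [pow_one] at ha, hap⟩ hFp
  -- Step B : a power of Qdeg1 annihilates K
  have hQrad : Qdeg1 I ≤ Ideal.radical (R := gradedRing I) K.annihilator := by
    rw [Qdeg1, Ideal.span_le]
    rintro g ⟨a, ha, rfl⟩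
    obtain ⟨k, hk⟩ := nilpotent_smul_of_mem_all_associatedPrimes
      (A := gradedRing I) (P := ↥K) _ (fun p hp => hKass p hp a (by rwa [pow_one]))
    refine Ideal.mem_radical_iff.2 ⟨k, ?_⟩
    rw [Submodule.mem_annihilator]
    intro z hz
    have h1 := hk ⟨z, hz⟩
    have h2 := congrArg (Subtype.val) h1
    rw [Submodule.coe_smul] at h2
    exact h2
  obtain ⟨m, hQm⟩ := Ideal.exists_pow_le_of_le_radical_of_fg (R := gradedRing I) (I := Qdeg1 I) (J := K.annihilator) hQrad (IsNoetherian.noetherian _)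
  -- Step C : finitely many generators of K, with representatives of bounded degree
  obtain ⟨T, hT⟩ : K.FG := IsNoetherian.noetherian K
  choose rep hrep using fun z : gradedModule I M =>
    Submodule.Quotient.mk_surjective
      (reesIdeal I • (⊤ : Submodule (reesAlgebra I) ↥(reesModule I M))) z
  set supbd : gradedModule I M → ℕ := fun z => (show ℕ →₀ M from ((rep z :
    ↥(reesModule I M)) : PolynomialModule R M).coeff).support.sup id with hsup
  set d : ℕ := T.sup supbd with hd
  have hrepbd : ∀ z ∈ T, ∀ j, d < j → ((rep z : ↥(reesModule I M)) : PolynomialModule R M).coeff j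
      = 0 := by
    intro z hz j hj
    by_contra hne
    have hmem : j ∈ (show ℕ →₀ M from ((rep z : ↥(reesModule I M)) :
        PolynomialModule R M).coeff).support := Finsupp.mem_support_iff.2 hne
    have h2 : id j ≤ supbd z := Finset.le_sup hmem
    have h3 : supbd z ≤ d := Finset.le_sup hz
    simp only [id] at h2
    omega
  -- every generator is in K, so multiplication by tˢf sends its rep into I·B(M)
  have hgenK : ∀ z ∈ T, ∀ j, f • ((rep z : ↥(reesModule I M)) : PolynomialModule R M).coeff j
      ∈ I ^ (s + j + 1) • (⊤ : Submodule R M) := by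
    intro z hz j
    have hzK : z ∈ K := hT ▸ Submodule.subset_span hz
    have h0 : F • z = 0 := hzK
    rw [← hrep z] at h0
    have h1 : ((⟨Polynomial.monomial s f, reesAlgebra.monomial_mem.mpr hf⟩ :
        ↥(reesAlgebra I)) • rep z) ∈ (reesIdeal I • ⊤ :
          Submodule (reesAlgebra I) ↥(reesModule I M)) := by
      rw [← Submodule.Quotient.mk_eq_zero]
      exact h0
    have h2 := (mem_smul_top_iff _).1 h1 (s + j)
    rw [coe_smul, PolynomialModule.monomial_smul_apply, if_pos (by omega),
      show s + j - s = j by omega] at h2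
    exact h2
  -- Step D : superficiality
  refine ⟨m + d, ?_⟩
  intro n hn x hx hfx
  have hzK : nu n x hx ∈ K := by
    show F • nu n x hx = 0
    rw [hF, show initialForm f hf = homElt I s f hf from rfl, homElt_smul_nu hf hx,
      nu_eq_zero_iff]
    rwa [show s + n + 1 = n + s + 1 by omega]
  rw [← hT] at hzK
  obtain ⟨g, -, hg⟩ := Submodule.mem_span_finset.1 hzK
  choose pg hpg using fun z : gradedModule I M =>
    Ideal.Quotient.mk_surjective (I := reesIdeal I) (g z)
  set b : ↥(reesModule I M) := T.sum (fun z => pg z • rep z) with hb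
  have hmkb : (Submodule.Quotient.mk b : gradedModule I M) = nu n x hx := by
    rw [← hg, hb]
    rw [show (Submodule.Quotient.mk (T.sum (fun z => pg z • rep z)) : gradedModule I M)
      = (reesIdeal I • (⊤ : Submodule (reesAlgebra I) ↥(reesModule I M))).mkQ
          (T.sum (fun z => pg z • rep z)) from rfl, map_sum]
    refine Finset.sum_congr rfl fun z hz => ?_
    show (Submodule.Quotient.mk (pg z • rep z) : gradedModule I M) = g z • z
    rw [← mk_smul_mk, hpg, hrep]
  have hdiff : ((⟨single R n x, mem_reesModule_single hx⟩ : ↥(reesModule I M)) - b)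
      ∈ (reesIdeal I • ⊤ : Submodule (reesAlgebra I) ↥(reesModule I M)) := by
    rw [← Submodule.Quotient.eq]
    exact (hmkb.symm : _)
  have h1 := (mem_smul_top_iff _).1 hdiff n
  rw [AddSubgroupClass.coe_sub, pm_sub_apply] at h1
  rw [show (single R n x).coeff n = x by rw [PolynomialModule.coeff_single, Finsupp.single_apply, if_pos rfl]] at h1
  -- suffices to show b.1 n ∈ I^(n+1) M
  suffices hbn : (b : PolynomialModule R M).coeff n ∈ I ^ (n + 1) • (⊤ : Submodule R M) by
    have := add_mem h1 hbn
    rwa [sub_add_cancel] at this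
  have hbcoe : (b : PolynomialModule R M).coeff n
      = T.sum (fun z => (((pg z : R[X]) • ((rep z : ↥(reesModule I M)) :
          PolynomialModule R M)) : PolynomialModule R M).coeff n) := by
    rw [hb, AddSubmonoidClass.coe_finset_sum, pm_finset_sum_apply]
    exact Finset.sum_congr rfl fun z _ => by rw [coe_smul]
  rw [hbcoe]
  refine sum_mem ?_
  intro z hz
  rw [PolynomialModule.smul_apply]
  refine sum_mem ?_
  rintro ⟨i, j⟩ hij
  rw [Finset.HasAntidiagonal.mem_antidiagonal] at hij
  rcases lt_or_ge d j with hj | hj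
  · rw [hrepbd z hz j hj, smul_zero]
    exact zero_mem _
  · -- j ≤ d, hence i ≥ m
    have him : m ≤ i := by omega
    set c : R := (pg z : R[X]).coeff i with hc
    have hcI : c ∈ I ^ i := (mem_reesAlgebra_iff I _).1 (pg z).2 i
    set y : M := ((rep z : ↥(reesModule I M)) : PolynomialModule R M).coeff j with hy
    have hyI : y ∈ I ^ j • (⊤ : Submodule R M) := coe_apply_mem _ j
    -- the component nu j y lies in K
    have hyK : nu j y hyI ∈ K := by
      show F • nu j y hyI = 0
      rw [hF, show initialForm f hf = homElt I s f hf from rfl, homElt_smul_nu hf hyI,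
        nu_eq_zero_iff]
      exact hgenK z hz j
    -- homElt i c kills K
    have hkill : homElt I i c hcI • nu j y hyI = 0 := by
      have hQi : homElt I i c hcI ∈ Qdeg1 I ^ i := homElt_mem_pow i c hcI
      have hQm' : homElt I i c hcI ∈ K.annihilator :=
        hQm (Ideal.pow_le_pow_right him hQi)
      exact Submodule.mem_annihilator.1 hQm' _ hyK
    rw [homElt_smul_nu hcI hyI] at hkill
    have := (nu_eq_zero_iff _).1 hkill
    rwa [show i + j + 1 = n + 1 by omega] at this

end Stmt8
/-- `f ∈ I^s \ I^{s+1}` is superficial for `M` w.r.t. `I` iff its initial form `f̄`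
avoids every associated prime `p` of `G_I(M)` over `G_I(R)` that does not contain the
degree-one part `I/I²` of `G_I(R)`. -/
theorem stmt_8 {R M : Type u} [CommRing R] [IsNoetherianRing R] [AddCommGroup M] [Module R M]
    [Module.Finite R M] (I : Ideal R) (f : R) (s : ℕ) (hf : f ∈ I ^ s) (hf' : f ∉ I ^ (s + 1)) :
    IsSuperficial I M f s ↔
      ∀ p ∈ associatedPrimes (gradedRing I) (gradedModule I M),
        (∃ a : R, ∃ ha : a ∈ I,
            initialForm a (show a ∈ I ^ 1 by simpa [pow_one] using ha) ∉ p) →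
          initialForm f hf ∉ p := by
  exact ⟨fun h => Stmt8.forward I f s hf h, fun h => Stmt8.converse I f s hf h⟩
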